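/- arXiv:1401.7456 — 9 statements merged into one kernel-verified Lean document; each statement's English description precedes it below -/
import Mathlib

section
/- (Opial's lemma, finite-dimensional version.) Let (x_k) be a sequence in ℝⁿ and let S be a nonempty subset of ℝⁿ. Suppose that (i) for every x ∈ S the sequence of real numbers ‖x_k − x‖ converges, and (ii) every cluster point of (x_k) belongs to S. Then (x_k) converges to a point x̄ ∈ S. -/
open Filter Topology

/-- Opial's lemma, finite-dimensional version. -/
theorem opial_lemma {n : ℕ} (x : ℕ → EuclideanSpace ℝ (Fin n))
    (S : Set (EuclideanSpace ℝ (Fin n))) (hS : S.Nonempty)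
    (h1 : ∀ p ∈ S, ∃ l : ℝ, Tendsto (fun k => ‖x k - p‖) atTop (𝓝 l))
    (h2 : ∀ p : EuclideanSpace ℝ (Fin n),
      (∃ φ : ℕ → ℕ, StrictMono φ ∧ Tendsto (x ∘ φ) atTop (𝓝 p)) → p ∈ S) :
    ∃ p ∈ S, Tendsto x atTop (𝓝 p) := by
  obtain ⟨p₀, hp₀⟩ := hS
  obtain ⟨l₀, hl₀⟩ := h1 p₀ hp₀
  -- the sequence is bounded
  obtain ⟨C, hC⟩ : ∃ C, ∀ k, ‖x k‖ ≤ C := by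
    obtain ⟨C, hC⟩ := hl₀.bddAbove_range
    refine ⟨C + ‖p₀‖, fun k => ?_⟩
    have h1 : ‖x k - p₀‖ ≤ C := hC ⟨k, rfl⟩
    have := norm_sub_norm_le (x k) p₀
    linarith
  have hmem : ∀ k, x k ∈ Metric.closedBall (0 : EuclideanSpace ℝ (Fin n)) C := by
    intro k; simpa [Metric.mem_closedBall, dist_eq_norm] using hC k
  have hbd : Bornology.IsBounded (Metric.closedBall (0 : EuclideanSpace ℝ (Fin n)) C) :=
    Metric.isBounded_closedBall
  -- uniqueness of cluster points
  have key : ∀ p ∈ S, ∀ q : EuclideanSpace ℝ (Fin n),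
      (∃ φ : ℕ → ℕ, StrictMono φ ∧ Tendsto (x ∘ φ) atTop (𝓝 p)) →
      (∃ ψ : ℕ → ℕ, StrictMono ψ ∧ Tendsto (x ∘ ψ) atTop (𝓝 q)) → q = p := by
    rintro p hp q ⟨φ, hφ, hpc⟩ ⟨ψ, hψ, hqc⟩
    obtain ⟨l, hl⟩ := h1 p hp
    have h0 : Tendsto (fun k => ‖x (φ k) - p‖) atTop (𝓝 l) := hl.comp hφ.tendsto_atTop
    have h0' : Tendsto (fun k => ‖x (φ k) - p‖) atTop (𝓝 0) := by
      have := ((hpc.sub_const p).norm)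
      simpa [Function.comp] using this
    have hl0 : l = 0 := tendsto_nhds_unique h0 h0'
    have h3 : Tendsto (fun k => ‖x (ψ k) - p‖) atTop (𝓝 l) := hl.comp hψ.tendsto_atTop
    have h3' : Tendsto (fun k => ‖x (ψ k) - p‖) atTop (𝓝 ‖q - p‖) := by
      have := ((hqc.sub_const p).norm)
      simpa [Function.comp] using this
    have : ‖q - p‖ = 0 := by
      have := tendsto_nhds_unique h3 h3'
      rw [hl0] at this; exact this.symm
    have := norm_eq_zero.mp this
    exact sub_eq_zero.mp this
  -- get a cluster point
  obtain ⟨p, -, φ, hφ, hconv⟩ := tendsto_subseq_of_bounded hbd hmem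
  have hpS := h2 p ⟨φ, hφ, hconv⟩
  refine ⟨p, hpS, tendsto_of_subseq_tendsto fun ns hns => ?_⟩
  obtain ⟨σ, hσ, hσ'⟩ := strictMono_subseq_of_tendsto_atTop hns
  obtain ⟨q, -, ψ, hψ, hqc⟩ := tendsto_subseq_of_bounded hbd (fun k => hmem (ns (σ k)))
  have hmono : StrictMono ((ns ∘ σ) ∘ ψ) := hσ'.comp hψ
  have hqc' : Tendsto (x ∘ ((ns ∘ σ) ∘ ψ)) atTop (𝓝 q) := by
    simpa [Function.comp_def] using hqc
  have hq : q = p := key p hpS q ⟨φ, hφ, hconv⟩ ⟨(ns ∘ σ) ∘ ψ, hmono, hqc'⟩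
  exact ⟨σ ∘ ψ, by simpa [Function.comp_def, hq] using hqc'⟩
end

section
/- Let F : ℝⁿ → (−∞, ∞] be a lower semi-continuous convex function, not identically equal to +∞ and bounded below, and let (λ_k) be a sequence of positive real numbers with divergent series Σ λ_k = ∞. Let (x_k) be a proximal sequence for F with parameters (λ_k), starting at an arbitrary point x₀ ∈ ℝⁿ. Then F(x_k) → η := inf{F(x) : x ∈ ℝⁿ} as k → ∞. -/
open Filter Topology

/-- Convergence of values along a proximal sequence (Rockafellar / Martinet,
finite-dimensional convex case): if `F` is a proper lower semi-continuous convex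
function with values in `(-∞, ∞]`, bounded below, and the positive parameters
`λ_k` form a divergent series, then `F (x_k)` tends to `inf F`. -/
theorem proximal_values_tendsto_inf {n : ℕ}
    (F : EuclideanSpace ℝ (Fin n) → EReal)
    (hbot : ∀ x, F x ≠ ⊥)
    (hlsc : LowerSemicontinuous F)
    (hconv : ∀ x y : EuclideanSpace ℝ (Fin n), ∀ a b : ℝ, 0 ≤ a → 0 ≤ b → a + b = 1 →
      F (a • x + b • y) ≤ (a : EReal) * F x + (b : EReal) * F y)
    (hproper : ∃ x, F x ≠ ⊤)
    (hbdd : ∃ c : ℝ, ∀ x, (c : EReal) ≤ F x)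
    (lam : ℕ → ℝ) (hlam : ∀ k, 0 < lam k)
    (hdiv : Tendsto (fun N => ∑ k ∈ Finset.range N, lam k) atTop atTop)
    (x : ℕ → EuclideanSpace ℝ (Fin n))
    (hprox : ∀ k : ℕ, ∀ y : EuclideanSpace ℝ (Fin n),
      F (x (k + 1)) + ((1 / (2 * lam k) * ‖x (k + 1) - x k‖ ^ 2 : ℝ) : EReal)
        ≤ F y + ((1 / (2 * lam k) * ‖y - x k‖ ^ 2 : ℝ) : EReal)) :
    Tendsto (fun k => F (x k)) atTop (𝓝 (⨅ y, F y)) := by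
  obtain ⟨y₀, hy₀⟩ := hproper
  -- Step A: values along the sequence are finite (from index 1 on)
  have hfin : ∀ k : ℕ, F (x (k + 1)) ≠ ⊤ := by
    intro k hk
    have h := hprox k y₀
    rw [hk] at h
    have h1 : ((⊤ : EReal) + ((1 / (2 * lam k) * ‖x (k + 1) - x k‖ ^ 2 : ℝ) : EReal)) = ⊤ :=
      EReal.top_add_coe _
    rw [h1, top_le_iff] at h
    have h2 : F y₀ + ((1 / (2 * lam k) * ‖y₀ - x k‖ ^ 2 : ℝ) : EReal) ≠ ⊤ := by
      lift F y₀ to ℝ using ⟨hy₀, hbot y₀⟩ with r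
      exact (EReal.coe_add r _ ▸ EReal.coe_ne_top _)
    exact h2 h
  -- monotone decreasing (from index 1 on)
  have hdec : ∀ k : ℕ, F (x (k + 1)) ≤ F (x k) := by
    intro k
    have h := hprox k (x k)
    simp only [sub_self, norm_zero, ne_eq, OfNat.ofNat_ne_zero, not_false_iff, zero_pow,
      mul_zero, EReal.coe_zero, add_zero] at h
    calc F (x (k + 1)) = F (x (k + 1)) + 0 := by rw [add_zero]
      _ ≤ F (x (k + 1)) + ((1 / (2 * lam k) * ‖x (k + 1) - x k‖ ^ 2 : ℝ) : EReal) := by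
          apply add_le_add_right
          have : (0:ℝ) ≤ 1 / (2 * lam k) * ‖x (k + 1) - x k‖ ^ 2 :=
            mul_nonneg (le_of_lt (one_div_pos.mpr (by linarith [hlam k]))) (by positivity)
          exact_mod_cast this
      _ ≤ F (x k) := h
  -- Step B: key inequality
  have key : ∀ k : ℕ, ∀ y : EuclideanSpace ℝ (Fin n), F y ≠ ⊤ →
      lam k * ((F (x (k+1))).toReal - (F y).toReal)
        ≤ (1/2) * (‖y - x k‖^2 - ‖y - x (k+1)‖^2) := by
    intro k y hy
    set p := (F (x (k+1))).toReal with hp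
    set q := (F y).toReal with hq
    have hpe : F (x (k+1)) = (p : EReal) := (EReal.coe_toReal (hfin k) (hbot _)).symm
    have hqe : F y = (q : EReal) := (EReal.coe_toReal hy (hbot _)).symm
    set c : ℝ := 1 / (2 * lam k) with hc
    have hcpos : 0 < c := one_div_pos.mpr (by linarith [hlam k])
    set u := x (k+1) - x k with hu
    set v := y - x (k+1) with hv
    -- for all t ∈ (0,1]
    have step : ∀ t : ℝ, 0 < t → t ≤ 1 →
        p - q ≤ 2*c*(inner ℝ u v : ℝ) + c * t * ‖v‖^2 := by
      intro t ht ht1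
      set z := t • y + (1-t) • x (k+1) with hz
      have hconv' : F z ≤ ((t*q + (1-t)*p : ℝ) : EReal) := by
        have := hconv y (x (k+1)) t (1-t) ht.le (by linarith) (by ring)
        rw [hpe, hqe] at this
        convert this using 2 <;> push_cast <;> ring
      have hprox' := hprox k z
      rw [hpe] at hprox'
      have hreal : p + c * ‖x (k+1) - x k‖^2 ≤ (t*q + (1-t)*p) + c * ‖z - x k‖^2 := by
        have h2 : ((p:EReal) + ((c * ‖x (k+1) - x k‖^2 : ℝ) : EReal))
            ≤ ((t*q + (1-t)*p : ℝ) : EReal) + ((c * ‖z - x k‖^2 : ℝ) : EReal) :=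
          le_trans hprox' (add_le_add_left hconv' _)
        exact_mod_cast h2
      have hzxk : z - x k = u + t • v := by
        rw [hz, hu, hv]
        module
      have hnorm : ‖z - x k‖^2 = ‖u‖^2 + 2*(t*(inner ℝ u v : ℝ)) + t^2*‖v‖^2 := by
        rw [hzxk, norm_add_sq_real, real_inner_smul_right, norm_smul, Real.norm_eq_abs,
          mul_pow, sq_abs]
      rw [hnorm, hu] at hreal
      have ht' : t * (p - q) ≤ t * (2*c*(inner ℝ u v : ℝ) + c * t * ‖v‖^2) := by nlinarith
      exact le_of_mul_le_mul_left ht' ht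
    have hlim : p - q ≤ 2*c*(inner ℝ u v : ℝ) := by
      apply le_of_forall_pos_le_add
      intro ε hε
      rcases le_or_gt (c * ‖v‖^2) 0 with h0 | h0
      · have := step 1 one_pos le_rfl
        nlinarith
      · set t := min 1 (ε / (c * ‖v‖^2)) with htdef
        have ht0 : 0 < t := lt_min one_pos (div_pos hε h0)
        have ht1 : t ≤ 1 := min_le_left _ _
        have := step t ht0 ht1
        have htb : c * t * ‖v‖^2 ≤ ε := by
          have : t ≤ ε / (c * ‖v‖^2) := min_le_right _ _
          calc c * t * ‖v‖^2 = t * (c * ‖v‖^2) := by ring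
            _ ≤ (ε / (c * ‖v‖^2)) * (c * ‖v‖^2) := by
                apply mul_le_mul_of_nonneg_right this h0.le
            _ = ε := div_mul_cancel₀ _ h0.ne'
        linarith
    -- rewrite inner product
    have hinner : 2*(inner ℝ u v : ℝ) = ‖y - x k‖^2 - ‖u‖^2 - ‖v‖^2 := by
      have huv : u + v = y - x k := by rw [hu, hv]; abel
      have := norm_add_sq_real u v
      rw [huv] at this
      linarith
    have hne : lam k ≠ 0 := (hlam k).ne'
    have hlamc : 2 * c = 1 / lam k := by
      rw [hc]; field_simp
    have : p - q ≤ c * (‖y - x k‖^2 - ‖u‖^2 - ‖v‖^2) := by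
      calc p - q ≤ 2*c*(inner ℝ u v : ℝ) := hlim
        _ = c * (2*(inner ℝ u v : ℝ)) := by ring
        _ = c * (‖y - x k‖^2 - ‖u‖^2 - ‖v‖^2) := by rw [hinner]
    have hcl : c * lam k = 1/2 := by
      rw [hc]; field_simp
    have hnn : 0 ≤ ‖u‖^2 := by positivity
    have hlk := hlam k
    calc lam k * (p - q) ≤ lam k * (c * (‖y - x k‖^2 - ‖u‖^2 - ‖v‖^2)) := by
          exact mul_le_mul_of_nonneg_left this hlk.le
      _ = (c * lam k) * (‖y - x k‖^2 - ‖u‖^2 - ‖v‖^2) := by ring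
      _ = (1/2) * (‖y - x k‖^2 - ‖u‖^2 - ‖v‖^2) := by rw [hcl]
      _ ≤ (1/2) * (‖y - x k‖^2 - ‖v‖^2) := by nlinarith
      _ = (1/2) * (‖y - x k‖^2 - ‖y - x (k+1)‖^2) := by rw [hv]
  -- monotonicity of toReal values from index 1
  have hmono : ∀ j k : ℕ, j ≤ k → (F (x (k+1))).toReal ≤ (F (x (j+1))).toReal := by
    intro j k hjk
    have h : F (x (k+1)) ≤ F (x (j+1)) := by
      clear key
      induction k with
      | zero => rw [Nat.le_zero.mp hjk]
      | succ m ih =>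
        rcases Nat.lt_or_ge j (m+1) with h | h
        · exact le_trans (hdec (m+1)) (ih (Nat.lt_succ_iff.mp h))
        · rw [le_antisymm hjk h]
    exact EReal.toReal_le_toReal h (hbot _) (hfin _)
  -- Step D: summed inequality
  have sumineq : ∀ m : ℕ, ∀ y : EuclideanSpace ℝ (Fin n), F y ≠ ⊤ →
      (∑ k ∈ Finset.range (m+1), lam k) * ((F (x (m+1))).toReal - (F y).toReal)
        ≤ (1/2) * ‖y - x 0‖^2 := by
    intro m y hy
    set q := (F y).toReal with hq
    have h1 : (∑ k ∈ Finset.range (m+1), lam k) * ((F (x (m+1))).toReal - q)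
        = ∑ k ∈ Finset.range (m+1), lam k * ((F (x (m+1))).toReal - q) := by
      rw [Finset.sum_mul]
    rw [h1]
    have h2 : ∑ k ∈ Finset.range (m+1), lam k * ((F (x (m+1))).toReal - q)
        ≤ ∑ k ∈ Finset.range (m+1), lam k * ((F (x (k+1))).toReal - q) := by
      apply Finset.sum_le_sum
      intro k hk
      have hk' : k ≤ m := Nat.lt_succ_iff.mp (Finset.mem_range.mp hk)
      have := hmono k m hk'
      nlinarith [hlam k]
    have h3 : ∑ k ∈ Finset.range (m+1), lam k * ((F (x (k+1))).toReal - q)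
        ≤ ∑ k ∈ Finset.range (m+1),
            ((1/2) * ‖y - x k‖^2 - (1/2) * ‖y - x (k+1)‖^2) := by
      apply Finset.sum_le_sum
      intro k _
      have := key k y hy
      linarith
    have h4 : ∑ k ∈ Finset.range (m+1),
          ((1/2) * ‖y - x k‖^2 - (1/2) * ‖y - x (k+1)‖^2)
        = (1/2) * ‖y - x 0‖^2 - (1/2) * ‖y - x (m+1)‖^2 :=
      Finset.sum_range_sub' (fun k => (1/2) * ‖y - x k‖^2) (m+1)
    have h5 : (0:ℝ) ≤ (1/2) * ‖y - x (m+1)‖^2 := by positivity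
    linarith
  -- Step E: conclusion
  set η := ⨅ y, F y with hη
  obtain ⟨cc, hcc⟩ := hbdd
  have hηlb : (cc : EReal) ≤ η := le_iInf hcc
  have hηbot : η ≠ ⊥ := fun h => by simp [h] at hηlb
  rw [tendsto_order]
  constructor
  · intro a ha
    filter_upwards with k
    exact lt_of_lt_of_le ha (iInf_le _ _)
  · intro a ha
    rcases eq_or_ne a ⊤ with rfl | hatop
    · filter_upwards [eventually_ge_atTop 1] with k hk
      obtain ⟨j, rfl⟩ := Nat.exists_eq_add_of_le hk
      rw [add_comm]
      exact (hfin j).lt_top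
    -- a is a real number
    have habot : a ≠ ⊥ := fun h => by rw [h] at ha; exact not_lt_bot (lt_of_le_of_lt (bot_le) ha) -- fix
    set ar := a.toReal with har
    have hae : a = (ar : EReal) := (EReal.coe_toReal hatop habot).symm
    obtain ⟨y, hy⟩ : ∃ y, F y < a := iInf_lt_iff.mp ha
    have hytop : F y ≠ ⊤ := fun h => by rw [h] at hy; exact not_top_lt hy
    set q := (F y).toReal with hq
    have hqe : F y = (q : EReal) := (EReal.coe_toReal hytop (hbot y)).symm
    have hqa : q < ar := by
      rw [hqe, hae] at hy; exact_mod_cast hy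
    set δ := ar - q with hδ
    have hδpos : 0 < δ := by simp [hδ]; linarith
    have hev : ∀ᶠ N in atTop, max 1 (‖y - x 0‖^2 / (2 * δ) + 1)
        ≤ ∑ k ∈ Finset.range N, lam k := hdiv.eventually_ge_atTop _
    filter_upwards [hev, eventually_ge_atTop 1] with N hN hN1
    obtain ⟨m, rfl⟩ := Nat.exists_eq_succ_of_ne_zero (by omega : N ≠ 0)
    set S := ∑ k ∈ Finset.range (m+1), lam k with hS
    have hSpos : 0 < S := lt_of_lt_of_le (by norm_num) (le_trans (le_max_left _ _) hN)
    have hSbig : ‖y - x 0‖^2 / (2 * δ) < S :=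
      lt_of_lt_of_le (by linarith [le_max_right (1:ℝ) (‖y - x 0‖^2 / (2 * δ) + 1)]) hN
    have hsum := sumineq m y hytop
    set fm := (F (x (m+1))).toReal with hfm
    have hfme : F (x (m+1)) = (fm : EReal) := (EReal.coe_toReal (hfin m) (hbot _)).symm
    have hfmlt : fm < ar := by
      have h6 : ‖y - x 0‖^2 < 2 * δ * S := by
        rw [div_lt_iff₀ (by positivity)] at hSbig
        linarith
      nlinarith
    rw [hfme, hae]
    exact_mod_cast hfmlt
end

section
/- Let F : ℝⁿ → (−∞, ∞] be a lower semi-continuous convex function, not identically equal to +∞ and bounded below, and let (λ_k) be a sequence of positive real numbers with divergent series Σ λ_k = ∞. Let (x_k) be a proximal sequence for F with parameters (λ_k). If the set of minimizers S := {x ∈ ℝⁿ : F(x) = inf F} is nonempty, then the sequence (x_k) converges to a point x̄ ∈ S. -/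
open Filter Topology

private lemma real_le_of_forall_pos_le_add {a b : ℝ} (h : ∀ ε : ℝ, 0 < ε → a ≤ b + ε) :
    a ≤ b := by
  by_contra hab
  push_neg at hab
  have := h ((a - b) / 2) (by linarith)
  linarith

private lemma norm_le_of_sq_le_sq {E : Type*} [NormedAddCommGroup E] {u v : E}
    (h : ‖u‖ ^ 2 ≤ ‖v‖ ^ 2) : ‖u‖ ≤ ‖v‖ := by
  nlinarith [norm_nonneg u, norm_nonneg v]

/-- Convergence of a proximal sequence to a minimizer (Rockafellar / Martinet,
finite-dimensional convex case): if moreover the set of minimizers of `F` is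
nonempty, the proximal sequence converges to a minimizer. -/
theorem proximal_sequence_tendsto_minimizer {n : ℕ}
    (F : EuclideanSpace ℝ (Fin n) → EReal)
    (hbot : ∀ x, F x ≠ ⊥)
    (hlsc : LowerSemicontinuous F)
    (hconv : ∀ x y : EuclideanSpace ℝ (Fin n), ∀ a b : ℝ, 0 ≤ a → 0 ≤ b → a + b = 1 →
      F (a • x + b • y) ≤ (a : EReal) * F x + (b : EReal) * F y)
    (hproper : ∃ x, F x ≠ ⊤)
    (hbdd : ∃ c : ℝ, ∀ x, (c : EReal) ≤ F x)
    (lam : ℕ → ℝ) (hlam : ∀ k, 0 < lam k)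
    (hdiv : Tendsto (fun N => ∑ k ∈ Finset.range N, lam k) atTop atTop)
    (x : ℕ → EuclideanSpace ℝ (Fin n))
    (hprox : ∀ k : ℕ, ∀ y : EuclideanSpace ℝ (Fin n),
      F (x (k + 1)) + ((1 / (2 * lam k) * ‖x (k + 1) - x k‖ ^ 2 : ℝ) : EReal)
        ≤ F y + ((1 / (2 * lam k) * ‖y - x k‖ ^ 2 : ℝ) : EReal))
    (hSne : {y : EuclideanSpace ℝ (Fin n) | F y = ⨅ z, F z}.Nonempty) :
    ∃ xbar : EuclideanSpace ℝ (Fin n),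
      F xbar = (⨅ z, F z) ∧ Tendsto x atTop (𝓝 xbar) := by
  obtain ⟨z0, hz0⟩ := hSne
  obtain ⟨c, hc⟩ := hbdd
  obtain ⟨w, hw⟩ := hproper
  set m : EReal := ⨅ z, F z with hm
  have hmc : (c : EReal) ≤ m := le_iInf hc
  have hmw : m ≤ F w := iInf_le _ w
  have hmbot : m ≠ ⊥ := fun h => by rw [h] at hmc; exact (EReal.coe_ne_bot c) (le_bot_iff.mp hmc)
  have hmtop : m ≠ ⊤ := fun h => hw (top_le_iff.mp (h ▸ hmw))
  set M : ℝ := m.toReal with hM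
  have hmM : m = (M : EReal) := (EReal.coe_toReal hmtop hmbot).symm
  have hz0m : F z0 = m := hz0
  have hz0M : F z0 = (M : EReal) := by rw [hz0m, hmM]
  -- finiteness along the sequence
  have hfin : ∀ k, F (x (k + 1)) ≠ ⊤ := by
    intro k htop
    have h := hprox k z0
    rw [htop, hz0M] at h
    have : ((M : EReal) + ((1 / (2 * lam k) * ‖z0 - x k‖ ^ 2 : ℝ) : EReal)) < ⊤ := by
      rw [← EReal.coe_add]; exact EReal.coe_lt_top _
    rw [EReal.top_add_coe] at h
    exact absurd (lt_of_le_of_lt h this) (lt_irrefl ⊤)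
  set f : ℕ → ℝ := fun k => (F (x (k + 1))).toReal with hf
  have hcoe : ∀ k, F (x (k + 1)) = (f k : EReal) :=
    fun k => (EReal.coe_toReal (hfin k) (hbot _)).symm
  have hfM : ∀ k, M ≤ f k := by
    intro k
    have h : m ≤ F (x (k + 1)) := iInf_le _ _
    rw [hmM, hcoe k] at h
    exact_mod_cast h
  -- key inequality
  have key : ∀ k, ∀ z : EuclideanSpace ℝ (Fin n), F z = (M : EReal) →
      ‖x (k + 1) - z‖ ^ 2 + 2 * lam k * (f k - M) ≤ ‖x k - z‖ ^ 2 := by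
    intro k z hz
    set u : EuclideanSpace ℝ (Fin n) := x (k + 1) - x k with hu
    set v : EuclideanSpace ℝ (Fin n) := z - x (k + 1) with hv
    set ip : ℝ := inner ℝ u v with hip
    have hlk := hlam k
    have hstep : ∀ t : ℝ, 0 < t → t ≤ 1 →
        f k - M ≤ 2 * (1 / (2 * lam k)) * ip + t * (1 / (2 * lam k) * ‖v‖ ^ 2) := by
      intro t ht ht1
      have hy : (1 - t) • x (k + 1) + t • z - x k = u + t • v := by
        rw [hu, hv]; module
      have h1 := hprox k ((1 - t) • x (k + 1) + t • z)
      have h2 := hconv (x (k + 1)) z (1 - t) t (by linarith) (le_of_lt ht) (by ring)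
      rw [hcoe k, hz] at h2
      have h2' : F ((1 - t) • x (k + 1) + t • z) ≤ (((1 - t) * f k + t * M : ℝ) : EReal) := by
        rw [EReal.coe_add, EReal.coe_mul, EReal.coe_mul] at *
        exact h2
      have h3 : F (x (k + 1)) + ((1 / (2 * lam k) * ‖x (k + 1) - x k‖ ^ 2 : ℝ) : EReal)
          ≤ (((1 - t) * f k + t * M + 1 / (2 * lam k) * ‖u + t • v‖ ^ 2 : ℝ) : EReal) := by
        refine le_trans h1 ?_
        rw [hy, EReal.coe_add]
        exact add_le_add_left h2' _
      rw [hcoe k, ← hu, ← EReal.coe_add, EReal.coe_le_coe_iff] at h3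
      have hnorm : ‖u + t • v‖ ^ 2 = ‖u‖ ^ 2 + 2 * (t * ip) + t ^ 2 * ‖v‖ ^ 2 := by
        rw [norm_add_sq_real, real_inner_smul_right, norm_smul, mul_pow, ← hip]
        simp [sq_abs]
      rw [hnorm] at h3
      have h4 : t * (f k - M) ≤ t * (2 * (1 / (2 * lam k)) * ip + t * (1 / (2 * lam k) * ‖v‖ ^ 2)) := by
        nlinarith [h3]
      exact le_of_mul_le_mul_left (by linarith [h4]) ht
    have hlim : f k - M ≤ 2 * (1 / (2 * lam k)) * ip := by
      apply real_le_of_forall_pos_le_add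
      intro ε hε
      set d : ℝ := 1 / (2 * lam k) * ‖v‖ ^ 2 with hd
      have hd0 : 0 ≤ d := by positivity
      set t : ℝ := min 1 (ε / (d + 1)) with htd
      have ht : 0 < t := lt_min one_pos (by positivity)
      have ht1 : t ≤ 1 := min_le_left _ _
      have htd' : t * d ≤ ε := by
        have h5 : t ≤ ε / (d + 1) := min_le_right _ _
        have : t * d ≤ (ε / (d + 1)) * d :=
          mul_le_mul_of_nonneg_right h5 hd0
        have h6 : (ε / (d + 1)) * d ≤ ε := by
          rw [div_mul_eq_mul_div, div_le_iff₀ (by linarith)]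
          nlinarith
        linarith
      have := hstep t ht ht1
      linarith
    -- polarization
    have hb : ‖x k - z‖ ^ 2 = ‖u‖ ^ 2 + 2 * ip + ‖v‖ ^ 2 := by
      have hxz : x k - z = -(u + v) := by rw [hu, hv]; module
      rw [hxz, norm_neg, norm_add_sq_real, ← hip]
    have hvz : ‖x (k + 1) - z‖ ^ 2 = ‖v‖ ^ 2 := by
      have : x (k + 1) - z = -v := by rw [hv]; module
      rw [this, norm_neg]
    have hmul : 2 * lam k * (f k - M) ≤ 2 * ip := by
      have h7 : 2 * lam k * (f k - M) ≤ 2 * lam k * (2 * (1 / (2 * lam k)) * ip) :=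
        mul_le_mul_of_nonneg_left hlim (by linarith)
      have h8 : 2 * lam k * (2 * (1 / (2 * lam k)) * ip) = 2 * ip := by
        field_simp
      linarith
    nlinarith [sq_nonneg ‖u‖]
  -- f is antitone
  have hfsucc : ∀ k, f (k + 1) ≤ f k := by
    intro k
    have h := hprox (k + 1) (x (k + 1))
    rw [sub_self] at h
    simp only [norm_zero, ne_eq, OfNat.ofNat_ne_zero, not_false_eq_true, zero_pow, mul_zero,
      EReal.coe_zero, add_zero] at h
    rw [hcoe (k + 1), hcoe k, ← EReal.coe_add] at h
    have h' : f (k + 1) + 1 / (2 * lam (k + 1)) * ‖x (k + 1 + 1) - x (k + 1)‖ ^ 2 ≤ f k := by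
      exact_mod_cast h
    have hpos : 0 ≤ 1 / (2 * lam (k + 1)) * ‖x (k + 1 + 1) - x (k + 1)‖ ^ 2 := by
      have := hlam (k + 1); positivity
    linarith
  have hfanti : Antitone f := antitone_nat_of_succ_le hfsucc
  -- telescoping sum
  have hsum : ∀ N, ∑ k ∈ Finset.range N, 2 * lam k * (f k - M) ≤ ‖x 0 - z0‖ ^ 2 := by
    have hsum' : ∀ N, ∑ k ∈ Finset.range N, 2 * lam k * (f k - M) + ‖x N - z0‖ ^ 2
        ≤ ‖x 0 - z0‖ ^ 2 := by
      intro N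
      induction N with
      | zero => simp
      | succ N ih =>
        rw [Finset.sum_range_succ]
        have := key N z0 hz0M
        linarith
    intro N
    have := hsum' N
    nlinarith [sq_nonneg ‖x N - z0‖]
  -- f tends to M
  have hftendsto : Tendsto f atTop (𝓝 M) := by
    rw [Metric.tendsto_atTop]
    intro ε hε
    have hex : ∃ k0, f k0 - M < ε := by
      by_contra hcon
      push_neg at hcon
      obtain ⟨N, hN⟩ := (hdiv.eventually (eventually_gt_atTop (‖x 0 - z0‖ ^ 2 / (2 * ε)))).exists
      have hle : ∑ k ∈ Finset.range N, 2 * lam k * ε ≤ ∑ k ∈ Finset.range N, 2 * lam k * (f k - M) := by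
        apply Finset.sum_le_sum
        intro k _
        exact mul_le_mul_of_nonneg_left (hcon k) (by linarith [hlam k])
      have heq : ∑ k ∈ Finset.range N, 2 * lam k * ε = 2 * ε * ∑ k ∈ Finset.range N, lam k := by
        rw [Finset.mul_sum]; apply Finset.sum_congr rfl; intro k _; ring
      have := hsum N
      rw [heq] at hle
      have h9 : 2 * ε * ∑ k ∈ Finset.range N, lam k ≤ ‖x 0 - z0‖ ^ 2 := by linarith
      have h10 : ‖x 0 - z0‖ ^ 2 / (2 * ε) < ∑ k ∈ Finset.range N, lam k := hN
      rw [div_lt_iff₀ (by linarith)] at h10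
      linarith
    obtain ⟨k0, hk0⟩ := hex
    refine ⟨k0, fun k hk => ?_⟩
    have h11 : f k ≤ f k0 := hfanti hk
    have h12 := hfM k
    rw [Real.dist_eq, abs_lt]
    constructor <;> linarith
  -- Fejér monotonicity w.r.t. any minimizer
  have hanti : ∀ z : EuclideanSpace ℝ (Fin n), F z = (M : EReal) →
      Antitone (fun k => ‖x k - z‖) := by
    intro z hz
    apply antitone_nat_of_succ_le
    intro k
    have := key k z hz
    apply norm_le_of_sq_le_sq
    nlinarith [hfM k, hlam k]
  -- bounded, extract convergent subsequence of x' = x ∘ (·+1)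
  set x' : ℕ → EuclideanSpace ℝ (Fin n) := fun k => x (k + 1) with hx'
  have hball : ∀ k, x' k ∈ Metric.closedBall z0 ‖x 0 - z0‖ := by
    intro k
    rw [Metric.mem_closedBall, dist_eq_norm]
    exact hanti z0 hz0M (Nat.zero_le (k + 1))
  obtain ⟨xbar, -, φ, hφ, hconv'⟩ :=
    tendsto_subseq_of_bounded Metric.isBounded_closedBall hball
  -- xbar is a minimizer
  have hxbar : F xbar = (M : EReal) := by
    have h1 : (M : EReal) ≤ F xbar := by rw [← hmM]; exact iInf_le _ _
    refine le_antisymm ?_ h1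
    by_contra h'
    push_neg at h'
    obtain ⟨y, hy1, hy2⟩ := exists_between h'
    have hytop : y ≠ ⊤ := (lt_of_lt_of_le hy2 le_top).ne
    have hybot : y ≠ ⊥ := (lt_of_le_of_lt (bot_le : (⊥:EReal) ≤ (M : EReal)) hy1).ne'
    set r : ℝ := y.toReal with hr
    have hyr : y = (r : EReal) := (EReal.coe_toReal hytop hybot).symm
    have hMr : M < r := by rw [hyr] at hy1; exact_mod_cast hy1
    have hev1 : ∀ᶠ j in atTop, y < F (x' (φ j)) :=
      hconv'.eventually (hlsc xbar y hy2)
    have hsubf : Tendsto (fun j => f (φ j)) atTop (𝓝 M) :=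
      hftendsto.comp hφ.tendsto_atTop
    have hev2 : ∀ᶠ j in atTop, f (φ j) < r :=
      hsubf.eventually (eventually_lt_nhds hMr)
    obtain ⟨j, hj1, hj2⟩ := (hev1.and hev2).exists
    rw [hx'] at hj1
    simp only at hj1
    rw [hcoe (φ j), hyr] at hj1
    have : r < f (φ j) := by exact_mod_cast hj1
    linarith
  -- convergence of the whole sequence
  have hg : Antitone (fun k => ‖x k - xbar‖) := hanti xbar hxbar
  have hbdd0 : BddBelow (Set.range fun k => ‖x k - xbar‖) :=
    ⟨0, fun a ⟨k, hk⟩ => hk ▸ norm_nonneg _⟩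
  have hgL : Tendsto (fun k => ‖x k - xbar‖) atTop (𝓝 (⨅ k, ‖x k - xbar‖)) :=
    tendsto_atTop_ciInf hg hbdd0
  have hsub0 : Tendsto (fun j => ‖x' (φ j) - xbar‖) atTop (𝓝 0) := by
    have := tendsto_iff_dist_tendsto_zero.mp hconv'
    simpa [dist_eq_norm] using this
  have hsubL : Tendsto (fun j => ‖x (φ j + 1) - xbar‖) atTop (𝓝 (⨅ k, ‖x k - xbar‖)) := by
    have hmono : StrictMono (fun j => φ j + 1) := fun a b hab => by
      simpa using hφ hab
    exact hgL.comp hmono.tendsto_atTop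
  have hL0 : (⨅ k, ‖x k - xbar‖) = 0 := tendsto_nhds_unique hsubL hsub0
  refine ⟨xbar, by rw [hxbar]; exact hmM.symm, ?_⟩
  rw [tendsto_iff_dist_tendsto_zero]
  simp only [dist_eq_norm]
  rw [← hL0]
  exact hgL
end

section
/- Let F : ℝⁿ → (−∞, ∞] be a convex function not identically +∞, let λ_k > 0, and let x_k, x_{k+1} ∈ ℝⁿ be such that x_{k+1} minimizes x ↦ F(x) + (1/(2λ_k))‖x − x_k‖² over ℝⁿ. Then for every x in the effective domain of F, ‖x_k − x‖² − ‖x_{k+1} − x‖² ≥ 2λ_k (F(x_{k+1}) − F(x)). -/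
open Filter Topology

/-- The key inequality for a proximal step of a proper convex function:
`‖x_k − x‖² − ‖x_{k+1} − x‖² ≥ 2 λ_k (F(x_{k+1}) − F(x))` for every `x` in the
effective domain of `F`. -/
theorem proximal_step_key_inequality {n : ℕ}
    (F : EuclideanSpace ℝ (Fin n) → EReal)
    (hbot : ∀ x, F x ≠ ⊥)
    (hproper : ∃ x, F x ≠ ⊤)
    (hconv : ∀ x y : EuclideanSpace ℝ (Fin n), ∀ a b : ℝ, 0 ≤ a → 0 ≤ b → a + b = 1 →
      F (a • x + b • y) ≤ (a : EReal) * F x + (b : EReal) * F y)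
    (lam : ℝ) (hlam : 0 < lam)
    (xk xk1 : EuclideanSpace ℝ (Fin n))
    (hmin : ∀ y : EuclideanSpace ℝ (Fin n),
      F xk1 + ((1 / (2 * lam) * ‖xk1 - xk‖ ^ 2 : ℝ) : EReal)
        ≤ F y + ((1 / (2 * lam) * ‖y - xk‖ ^ 2 : ℝ) : EReal)) :
    ∀ x : EuclideanSpace ℝ (Fin n), F x ≠ ⊤ →
      ((2 * lam : ℝ) : EReal) * (F xk1 - F x)
        ≤ ((‖xk - x‖ ^ 2 - ‖xk1 - x‖ ^ 2 : ℝ) : EReal) := by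
  intro x hx
  -- F xk1 is finite
  obtain ⟨y0, hy0⟩ := hproper
  have hxk1_top : F xk1 ≠ ⊤ := by
    intro h
    have := hmin y0
    rw [h] at this
    have h1 : (⊤ : EReal) + ((1 / (2 * lam) * ‖xk1 - xk‖ ^ 2 : ℝ) : EReal) = ⊤ :=
      EReal.top_add_of_ne_bot (EReal.coe_ne_bot _)
    rw [h1, top_le_iff] at this
    exact (EReal.add_lt_top hy0 (EReal.coe_ne_top _)).ne this
  set a : ℝ := (F xk1).toReal with ha_def
  set b : ℝ := (F x).toReal with hb_def
  have haF : F xk1 = (a : EReal) := (EReal.coe_toReal hxk1_top (hbot xk1)).symm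
  have hbF : F x = (b : EReal) := (EReal.coe_toReal hx (hbot x)).symm
  set u : EuclideanSpace ℝ (Fin n) := xk1 - xk with hu
  set v : EuclideanSpace ℝ (Fin n) := x - xk1 with hv
  -- real inequality for each t ∈ (0,1]
  have key : ∀ t : ℝ, 0 < t → t ≤ 1 →
      a - b ≤ (1 / lam) * inner ℝ u v + (1 / (2 * lam)) * t * ‖v‖ ^ 2 := by
    intro t ht ht1
    have hyt : t • x + (1 - t) • xk1 - xk = u + t • v := by
      simp only [hu, hv, smul_sub]
      try module
    have hnorm : ‖t • x + (1 - t) • xk1 - xk‖ ^ 2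
        = ‖u‖ ^ 2 + 2 * (t * inner ℝ u v) + t ^ 2 * ‖v‖ ^ 2 := by
      rw [hyt, norm_add_sq_real, real_inner_smul_right, norm_smul, Real.norm_eq_abs,
        abs_of_pos ht, mul_pow]
      try ring
    have hc := hconv x xk1 t (1 - t) ht.le (by linarith) (by ring)
    have hm := hmin (t • x + (1 - t) • xk1)
    rw [haF, hbF] at hc
    rw [haF] at hm
    have hchain : ((a + 1 / (2 * lam) * ‖xk1 - xk‖ ^ 2 : ℝ) : EReal)
        ≤ ((t * b + (1 - t) * a + 1 / (2 * lam) * ‖t • x + (1 - t) • xk1 - xk‖ ^ 2 : ℝ) : EReal) := by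
      push_cast
      calc ((a : EReal) + ((1 / (2 * lam) * ‖xk1 - xk‖ ^ 2 : ℝ) : EReal))
          ≤ F (t • x + (1 - t) • xk1)
            + ((1 / (2 * lam) * ‖t • x + (1 - t) • xk1 - xk‖ ^ 2 : ℝ) : EReal) := by
            convert hm using 2 <;> push_cast <;> ring_nf
        _ ≤ ((t : EReal) * (b : EReal) + ((1 - t : ℝ) : EReal) * (a : EReal))
            + ((1 / (2 * lam) * ‖t • x + (1 - t) • xk1 - xk‖ ^ 2 : ℝ) : EReal) := by
            exact add_le_add hc le_rfl
        _ = _ := by push_cast; ring_nf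
    have hre : a + 1 / (2 * lam) * ‖xk1 - xk‖ ^ 2
        ≤ t * b + (1 - t) * a + 1 / (2 * lam) * ‖t • x + (1 - t) • xk1 - xk‖ ^ 2 :=
      EReal.coe_le_coe_iff.mp hchain
    rw [hnorm] at hre
    -- t * (a - b) ≤ 1/(2λ) * (2 t ⟪u,v⟫ + t² ‖v‖²)
    have hlam' : (0:ℝ) < 2 * lam := by linarith
    have h2 : t * (a - b) ≤ t * ((1 / lam) * inner ℝ u v + (1 / (2 * lam)) * t * ‖v‖ ^ 2) := by
      have e : t * ((1 / lam) * inner ℝ u v + (1 / (2 * lam)) * t * ‖v‖ ^ 2)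
          = 1 / (2 * lam) * (2 * (t * inner ℝ u v) + t ^ 2 * ‖v‖ ^ 2) := by
        field_simp
      rw [e]
      nlinarith [hre]
    exact le_of_mul_le_mul_left (by linarith [h2]) ht
  -- take t → 0
  have hKle : a - b ≤ (1 / lam) * inner ℝ u v := by
    apply le_of_forall_pos_le_add
    intro ε hε
    set M : ℝ := (1 / (2 * lam)) * ‖v‖ ^ 2 with hM
    have hM0 : 0 ≤ M := by positivity
    set t : ℝ := min 1 (ε / (M + 1)) with ht_def
    have ht0 : 0 < t := lt_min one_pos (by positivity)
    have ht1 : t ≤ 1 := min_le_left _ _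
    have := key t ht0 ht1
    have hMt : M * t ≤ ε := by
      have h1 : t ≤ ε / (M + 1) := min_le_right _ _
      have : M * t ≤ (M + 1) * (ε / (M + 1)) := by
        apply mul_le_mul (by linarith) h1 ht0.le (by linarith)
      rwa [mul_div_cancel₀ _ (by linarith : M + 1 ≠ 0)] at this
    have e : (1 / (2 * lam)) * t * ‖v‖ ^ 2 = M * t := by rw [hM]; ring
    rw [e] at this
    linarith
  -- geometric identity
  have hgeo : 2 * inner ℝ u v ≤ ‖xk - x‖ ^ 2 - ‖xk1 - x‖ ^ 2 := by
    have h1 : xk - x = -(u + v) := by simp only [hu, hv]; abel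
    have h2 : xk1 - x = -v := by simp only [hv]; abel
    rw [h1, h2, norm_neg, norm_neg, norm_add_sq_real]
    nlinarith [sq_nonneg ‖u‖]
  have hfinal : 2 * lam * (a - b) ≤ ‖xk - x‖ ^ 2 - ‖xk1 - x‖ ^ 2 := by
    have : 2 * lam * (a - b) ≤ 2 * lam * ((1 / lam) * inner ℝ u v) := by
      apply mul_le_mul_of_nonneg_left hKle (by linarith)
    have e : 2 * lam * ((1 / lam) * (inner ℝ u v : ℝ)) = 2 * inner ℝ u v := by
      field_simp
    rw [e] at this
    linarith
  rw [haF, hbF]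
  calc ((2 * lam : ℝ) : EReal) * ((a : EReal) - (b : EReal))
      = ((2 * lam * (a - b) : ℝ) : EReal) := by
        rw [← EReal.coe_sub, ← EReal.coe_mul]
    _ ≤ _ := EReal.coe_le_coe_iff.mpr hfinal
end

section
/- Let R be a real m×n matrix, g ∈ ℝᵐ, and let P be a Penrose pseudoinverse of R. Then P·g is the minimum-norm least-squares solution of R·f = g: P·g minimizes f ↦ ‖g − R·f‖ over ℝⁿ, and for every other minimizer f of this function one has ‖P·g‖ ≤ ‖f‖. -/
open Matrix
set_option maxHeartbeats 1000000

lemma myMulE {a b c : ℕ} (M : Matrix (Fin a) (Fin b) ℝ) (N : Matrix (Fin b) (Fin c) ℝ)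
    (x : EuclideanSpace ℝ (Fin c)) :
    Matrix.toEuclideanLin (M * N) x = Matrix.toEuclideanLin M (Matrix.toEuclideanLin N x) := by
  simp [Matrix.toEuclideanLin_apply, Matrix.mulVec_mulVec]

open RealInnerProductSpace in
lemma myAdj {a b : ℕ} (M : Matrix (Fin a) (Fin b) ℝ) (x : EuclideanSpace ℝ (Fin b))
    (y : EuclideanSpace ℝ (Fin a)) :
    ⟪Matrix.toEuclideanLin M x, y⟫ = ⟪x, Matrix.toEuclideanLin Mᵀ y⟫ := by
  rw [← Matrix.conjTranspose_eq_transpose_of_trivial,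
    Matrix.toEuclideanLin_conjTranspose_eq_adjoint, LinearMap.adjoint_inner_right]

/-- `P·g` is the minimum-norm least-squares solution of `R·f = g`, where `P` is
a Penrose pseudoinverse of `R`. -/
theorem pseudoinverse_is_min_norm_least_squares {m n : ℕ}
    (R : Matrix (Fin m) (Fin n) ℝ) (g : EuclideanSpace ℝ (Fin m))
    (P : Matrix (Fin n) (Fin m) ℝ)
    (h1 : R * P * R = R) (h2 : P * R * P = P)
    (h3 : (R * P)ᵀ = R * P) (h4 : (P * R)ᵀ = P * R) :
    (∀ f : EuclideanSpace ℝ (Fin n),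
        ‖g - Matrix.toEuclideanLin R (Matrix.toEuclideanLin P g)‖
          ≤ ‖g - Matrix.toEuclideanLin R f‖) ∧
    (∀ f : EuclideanSpace ℝ (Fin n),
        (∀ f' : EuclideanSpace ℝ (Fin n),
          ‖g - Matrix.toEuclideanLin R f‖ ≤ ‖g - Matrix.toEuclideanLin R f'‖) →
        ‖Matrix.toEuclideanLin P g‖ ≤ ‖f‖) := by
  set A := Matrix.toEuclideanLin R with hA
  set B := Matrix.toEuclideanLin P with hB
  set q : EuclideanSpace ℝ (Fin m) := g - A (B g) with hq
  -- key matrix identity: Rᵀ * R * P = Rᵀ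
  have hkey : Rᵀ * (R * P) = Rᵀ := by
    rw [← h3, ← Matrix.transpose_mul, h1]
  have horth : ∀ x : EuclideanSpace ℝ (Fin n), inner ℝ q (A x) = (0 : ℝ) := by
    intro x
    have : inner ℝ (A x) q = (0 : ℝ) := by
      rw [hA, myAdj]
      have : (Matrix.toEuclideanLin Rᵀ q : EuclideanSpace ℝ (Fin n)) = 0 := by
        rw [hq, map_sub, hA, hB, ← myMulE, ← myMulE, Matrix.mul_assoc, hkey, sub_self]
      rw [this, inner_zero_right]
    rwa [← real_inner_comm]
  have hpyth : ∀ f : EuclideanSpace ℝ (Fin n),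
      ‖g - A f‖ ^ 2 = ‖q‖ ^ 2 + ‖A (B g - f)‖ ^ 2 := by
    intro f
    have hdecomp : g - A f = q + A (B g - f) := by
      rw [hq, map_sub]; abel
    rw [hdecomp, norm_add_sq_real, horth]
    ring
  have part1 : ∀ f : EuclideanSpace ℝ (Fin n), ‖q‖ ≤ ‖g - A f‖ := by
    intro f
    have := hpyth f
    nlinarith [norm_nonneg (A (B g - f)), norm_nonneg q, norm_nonneg (g - A f)]
  refine ⟨part1, ?_⟩
  intro f hf
  -- f minimizer implies A f = A (B g)
  have heq : ‖g - A f‖ = ‖q‖ := by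
    refine le_antisymm ?_ (part1 f)
    have h5 := hf (B g)
    rwa [← hq] at h5
  have hABf : A (B g - f) = 0 := by
    have := hpyth f
    rw [heq] at this
    have h0 : ‖A (B g - f)‖ = 0 := by nlinarith [norm_nonneg (A (B g - f))]
    exact norm_eq_zero.mp h0
  have hABg : A (B g) = A f := by
    have := hABf
    rw [map_sub, sub_eq_zero] at this
    exact this
  -- B g = toEuclideanLin (P*R) f
  have hBg : B g = Matrix.toEuclideanLin (P * R) f := by
    calc B g = Matrix.toEuclideanLin (P * R * P) g := by rw [h2]
      _ = B (A (B g)) := by rw [myMulE, myMulE, hA, hB]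
      _ = B (A f) := by rw [hABg]
      _ = Matrix.toEuclideanLin (P * R) f := by rw [myMulE, hA, hB]
  set Q := Matrix.toEuclideanLin (P * R) with hQ
  have hproj : ‖Q f‖ ^ 2 ≤ ‖f‖ * ‖Q f‖ := by
    have : (inner ℝ (Q f) (Q f) : ℝ) = inner ℝ f (Q f) := by
      rw [hQ, myAdj, h4, ← myMulE,
        show P * R * (P * R) = P * R by simp only [← Matrix.mul_assoc]; rw [h2]]
    rw [← real_inner_self_eq_norm_sq, this]
    exact real_inner_le_norm f (Q f)
  rw [hBg]
  rcases eq_or_ne (‖Q f‖) 0 with h | h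
  · rw [h]; exact norm_nonneg f
  · have hpos : 0 < ‖Q f‖ := (norm_nonneg _).lt_of_ne (Ne.symm h)
    nlinarith
end

section
/- Let R be a real m×n matrix, g ∈ ℝᵐ, let P be a Penrose pseudoinverse of R, and let (λ_k) be positive reals with Σ λ_k = ∞. Let (f_k) be a proximal sequence for F(f) = (1/2)‖g − R·f‖² with parameters (λ_k) starting at f₀ = 0. Then the sequence (f_k) converges to P·g. -/
open Matrix Filter Topology
open scoped RealInnerProductSpace

/-- If a quadratic `a*t + b*t^2` is nonnegative for all `t`, its linear
coefficient vanishes. -/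
lemma aux_quadratic_coeff_zero {a b : ℝ} (h : ∀ t : ℝ, 0 ≤ a * t + b * t ^ 2) :
    a = 0 := by
  by_contra ha
  rcases le_or_gt b 0 with hb | hb
  · have h1 := h (-a)
    have h3 : 0 < a ^ 2 := by positivity
    nlinarith
  · have h1 := h (-a / (2 * b))
    have hb' : (0:ℝ) < 2 * b := by linarith
    have h2 : a * (-a / (2 * b)) + b * (-a / (2 * b)) ^ 2 = -(a ^ 2) / (4 * b) := by
      field_simp; ring
    rw [h2] at h1
    have h3 : 0 < a ^ 2 := by positivity
    have h4 : 0 < (4:ℝ) * b := by linarith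
    rw [neg_div] at h1
    linarith [div_pos h3 h4]

/-- Composition of `toEuclideanLin`. -/
lemma toEuclideanLin_mul_apply {a b c : ℕ} (A : Matrix (Fin a) (Fin b) ℝ)
    (B : Matrix (Fin b) (Fin c) ℝ) (v : EuclideanSpace ℝ (Fin c)) :
    Matrix.toEuclideanLin (A * B) v = Matrix.toEuclideanLin A (Matrix.toEuclideanLin B v) := by
  simp [Matrix.toEuclideanLin_apply, Matrix.mulVec_mulVec]

set_option maxHeartbeats 1000000 in
set_option synthInstance.maxHeartbeats 1000000 in
/-- Abstract version: proximal sequence convergence for least squares in a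
finite-dimensional real inner product space. -/
lemma prox_tendsto
    {E F : Type*} [NormedAddCommGroup E] [InnerProductSpace ℝ E] [FiniteDimensional ℝ E]
    [NormedAddCommGroup F] [InnerProductSpace ℝ F] [FiniteDimensional ℝ F]
    (L : E →ₗ[ℝ] F) (g : F) (fs : E)
    (hstar : (LinearMap.adjoint L) (L fs) = (LinearMap.adjoint L) g)
    (hrange : fs ∈ LinearMap.range (LinearMap.adjoint L))
    (lam : ℕ → ℝ) (hlam : ∀ k, 0 < lam k)
    (hdiv : Tendsto (fun N => ∑ k ∈ Finset.range N, lam k) atTop atTop)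
    (f : ℕ → E) (hf0 : f 0 = 0)
    (hprox : ∀ k y,
      (1/2 : ℝ) * ‖g - L (f (k+1))‖^2 + 1/(2*lam k) * ‖f (k+1) - f k‖^2
        ≤ (1/2 : ℝ) * ‖g - L y‖^2 + 1/(2*lam k) * ‖y - f k‖^2) :
    Tendsto f atTop (𝓝 fs) := by
  have hlne : ∀ k, lam k ≠ 0 := fun k => (hlam k).ne'
  -- Step equation
  have hstep : ∀ k, f (k+1) - f k = lam k • (LinearMap.adjoint L) (g - L (f (k+1))) := by
    intro k
    have key : ∀ v : E,
        ⟪f (k+1) - f k, v⟫ = lam k * ⟪g - L (f (k+1)), L v⟫ := by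
      intro v
      have hq : ∀ t : ℝ, 0 ≤ ((1/lam k) * ⟪f (k+1) - f k, v⟫ - ⟪g - L (f (k+1)), L v⟫) * t
          + ((1/2 : ℝ)*‖L v‖^2 + 1/(2*lam k)*‖v‖^2) * t ^ 2 := by
        intro t
        have e1 : ‖g - L (f (k+1) + t • v)‖^2
            = ‖g - L (f (k+1))‖^2 - 2*t*⟪g - L (f (k+1)), L v⟫ + t^2*‖L v‖^2 := by
          rw [map_add, _root_.map_smul, sub_add_eq_sub_sub, norm_sub_sq_real,
            real_inner_smul_right, norm_smul]
          simp [Real.norm_eq_abs, mul_pow, sq_abs]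
          ring
        have e2 : ‖f (k+1) + t • v - f k‖^2
            = ‖f (k+1) - f k‖^2 + 2*t*⟪f (k+1) - f k, v⟫ + t^2*‖v‖^2 := by
          rw [add_sub_right_comm, norm_add_sq_real, real_inner_smul_right, norm_smul]
          simp [Real.norm_eq_abs, mul_pow, sq_abs]
          ring
        have h := hprox k (f (k+1) + t • v)
        rw [e1, e2] at h
        have h' := sub_nonneg.mpr h
        have hexp : (1/2 : ℝ) * (‖g - L (f (k+1))‖^2 - 2*t*⟪g - L (f (k+1)), L v⟫ + t^2*‖L v‖^2)
            + 1/(2*lam k) * (‖f (k+1) - f k‖^2 + 2*t*⟪f (k+1) - f k, v⟫ + t^2*‖v‖^2)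
            - ((1/2 : ℝ) * ‖g - L (f (k+1))‖^2 + 1/(2*lam k) * ‖f (k+1) - f k‖^2)
            = ((1/lam k) * ⟪f (k+1) - f k, v⟫ - ⟪g - L (f (k+1)), L v⟫) * t
            + ((1/2 : ℝ)*‖L v‖^2 + 1/(2*lam k)*‖v‖^2) * t ^ 2 := by
          field_simp
          ring
        rw [hexp] at h'
        exact h'
      have ha := aux_quadratic_coeff_zero hq
      have : (1/lam k) * ⟪f (k+1) - f k, v⟫ = ⟪g - L (f (k+1)), L v⟫ := by linarith
      field_simp [hlne k] at this
      linarith [this]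
    have : ∀ v : E, ⟪f (k+1) - f k - lam k • (LinearMap.adjoint L) (g - L (f (k+1))), v⟫ = 0 := by
      intro v
      rw [inner_sub_left, real_inner_smul_left, LinearMap.adjoint_inner_left, key v]
      ring
    have h0 := this (f (k+1) - f k - lam k • (LinearMap.adjoint L) (g - L (f (k+1))))
    rw [real_inner_self_eq_norm_sq] at h0
    have := pow_eq_zero_iff (n := 2) (by norm_num) |>.mp h0
    rw [norm_eq_zero, sub_eq_zero] at this
    exact this
  -- Error sequence
  set e : ℕ → E := fun k => f k - fs with he
  have hestep : ∀ k, e (k+1) = e k - lam k • (LinearMap.adjoint L) (L (e (k+1))) := by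
    intro k
    have h := hstep k
    have hL : (LinearMap.adjoint L) (g - L (f (k+1)))
        = - (LinearMap.adjoint L) (L (f (k+1) - fs)) := by
      rw [map_sub, map_sub, map_sub, hstar]
      abel
    rw [hL] at h
    simp only [he]
    have hthis : f (k+1) - f k = -(lam k • (LinearMap.adjoint L) (L (f (k+1) - fs))) := by
      rw [h, smul_neg]
    have h2 : f (k+1) - fs - (f k - fs)
        = -(lam k • (LinearMap.adjoint L) (L (f (k+1) - fs))) := by
      rw [sub_sub_sub_cancel_right]; exact hthis
    have h3 := sub_eq_iff_eq_add.mp h2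
    exact h3.trans (by abel)
  have hrangee : ∀ k, e k ∈ LinearMap.range (LinearMap.adjoint L) := by
    intro k
    induction k with
    | zero =>
      simp only [he, hf0, zero_sub]
      exact neg_mem hrange
    | succ k ih =>
      rw [hestep k]
      exact sub_mem ih (Submodule.smul_mem _ _ ⟨L (e (k+1)), rfl⟩)
  -- Coercivity on the range of the adjoint
  obtain ⟨c, hc, hcoer⟩ : ∃ c : ℝ, 0 < c ∧
      ∀ v ∈ LinearMap.range (LinearMap.adjoint L), c * ‖v‖^2 ≤ ‖L v‖^2 := by
    set M := LinearMap.range (LinearMap.adjoint L) with hM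
    set Lres : M →ₗ[ℝ] F := L.comp M.subtype with hLres
    have hinj : Function.Injective Lres := by
      rw [← LinearMap.ker_eq_bot]
      rw [LinearMap.ker_eq_bot']
      rintro ⟨v, w, hw⟩ hv
      have hv' : L v = 0 := hv
      have hvv : ⟪v, v⟫ = 0 := by
        calc ⟪v, v⟫ = ⟪(LinearMap.adjoint L) w, v⟫ := by rw [hw]
          _ = ⟪w, L v⟫ := LinearMap.adjoint_inner_left _ _ _
          _ = 0 := by rw [hv', inner_zero_right]
      have hv0 : v = 0 := inner_self_eq_zero.mp hvv
      exact Subtype.ext hv0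
    set eqv := LinearEquiv.ofInjective Lres hinj with heqv
    set S := LinearMap.toContinuousLinearMap (eqv.symm.toLinearMap) with hS
    set C := ‖S‖ with hC
    have hCnn : 0 ≤ C := norm_nonneg S
    have hbd : ∀ v : M, ‖(v : E)‖ ≤ (C + 1) * ‖L (v : E)‖ := by
      intro v
      have h1 : eqv.symm (eqv v) = v := eqv.symm_apply_apply v
      have h2 : ‖(v : E)‖ = ‖S (eqv v)‖ := by
        rw [hS]
        simp only [LinearMap.coe_toContinuousLinearMap', LinearEquiv.coe_coe, h1]
        rfl
      have h3 : ‖S (eqv v)‖ ≤ C * ‖eqv v‖ := S.le_opNorm _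
      have h4 : ‖eqv v‖ = ‖L (v : E)‖ := by
        have : ((eqv v : LinearMap.range Lres) : F) = Lres v := rfl
        rw [show ‖eqv v‖ = ‖((eqv v : LinearMap.range Lres) : F)‖ from rfl, this]
        rfl
      have h5 : C * ‖eqv v‖ ≤ (C + 1) * ‖eqv v‖ := by
        apply mul_le_mul_of_nonneg_right (by linarith) (norm_nonneg _)
      calc ‖(v : E)‖ = ‖S (eqv v)‖ := h2
        _ ≤ C * ‖eqv v‖ := h3
        _ ≤ (C + 1) * ‖eqv v‖ := h5
        _ = (C + 1) * ‖L (v : E)‖ := by rw [h4]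
    refine ⟨((C + 1)^2)⁻¹, by positivity, ?_⟩
    intro v hv
    have := hbd ⟨v, hv⟩
    simp only at this
    have h6 : ‖v‖^2 ≤ ((C+1) * ‖L v‖)^2 := by
      apply sq_le_sq' _ this
      have : 0 ≤ (C+1) * ‖L v‖ := by positivity
      linarith [norm_nonneg v]
    rw [mul_pow] at h6
    rw [inv_mul_le_iff₀ (by positivity)]
    linarith
  -- Norm decrease
  have hdec : ∀ k, (1 + lam k * c) * ‖e (k+1)‖ ≤ ‖e k‖ := by
    intro k
    have h := hestep k
    have h1 : ‖e (k+1)‖^2 + lam k * ‖L (e (k+1))‖^2 = ⟪e k, e (k+1)⟫ := by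
      have h2 : e (k+1) + lam k • (LinearMap.adjoint L) (L (e (k+1))) = e k :=
        eq_sub_iff_add_eq.mp (hestep k)
      rw [← h2, inner_add_left, real_inner_smul_left, LinearMap.adjoint_inner_left,
        real_inner_self_eq_norm_sq, real_inner_self_eq_norm_sq]
    have h2 : ⟪e k, e (k+1)⟫ ≤ ‖e k‖ * ‖e (k+1)‖ := real_inner_le_norm _ _
    have h3 : c * ‖e (k+1)‖^2 ≤ ‖L (e (k+1))‖^2 := hcoer _ (hrangee (k+1))
    rcases eq_or_lt_of_le (norm_nonneg (e (k+1))) with h4 | h4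
    · rw [← h4, mul_zero]
      exact norm_nonneg _
    · nlinarith [(hlam k).le]
  -- Summation bound
  have hSnn : ∀ k, 0 ≤ ∑ j ∈ Finset.range k, lam j :=
    fun k => Finset.sum_nonneg fun j _ => (hlam j).le
  have hsum : ∀ k, (1 + c * ∑ j ∈ Finset.range k, lam j) * ‖e k‖ ≤ ‖e 0‖ := by
    intro k
    induction k with
    | zero => simp
    | succ k ih =>
      rw [Finset.sum_range_succ]
      have hd := hdec k
      have hS := hSnn k
      nlinarith [norm_nonneg (e (k+1)), norm_nonneg (e k), (hlam k).le, hc.le,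
        mul_le_mul_of_nonneg_left hd (by positivity : (0:ℝ) ≤ 1 + c * ∑ j ∈ Finset.range k, lam j),
        mul_nonneg (mul_nonneg (mul_nonneg (mul_nonneg hc.le hc.le) (hlam k).le) hS)
          (norm_nonneg (e (k+1)))]
  -- Conclude
  have hpos : ∀ k, 0 < 1 + c * ∑ j ∈ Finset.range k, lam j := by
    intro k
    have := hSnn k
    nlinarith
  have hbound : ∀ k, ‖e k‖ ≤ ‖e 0‖ / (1 + c * ∑ j ∈ Finset.range k, lam j) := by
    intro k
    rw [le_div_iff₀ (hpos k)]
    calc ‖e k‖ * (1 + c * ∑ j ∈ Finset.range k, lam j)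
        = (1 + c * ∑ j ∈ Finset.range k, lam j) * ‖e k‖ := by ring
      _ ≤ ‖e 0‖ := hsum k
  have hden : Tendsto (fun k => 1 + c * ∑ j ∈ Finset.range k, lam j) atTop atTop := by
    apply tendsto_atTop_add_const_left
    exact hdiv.const_mul_atTop hc
  have hzero : Tendsto (fun k => ‖e k‖) atTop (𝓝 0) :=
    squeeze_zero (fun k => norm_nonneg _) hbound (tendsto_const_nhds.div_atTop hden)
  rw [tendsto_iff_norm_sub_tendsto_zero]
  exact hzero

/-- The proximal sequence for the least-squares functional, started at the
origin, converges to the minimum-norm least-squares solution `P·g`. -/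
theorem proximal_sequence_tendsto_pseudoinverse_solution {m n : ℕ}
    (R : Matrix (Fin m) (Fin n) ℝ) (g : EuclideanSpace ℝ (Fin m))
    (P : Matrix (Fin n) (Fin m) ℝ)
    (h1 : R * P * R = R) (h2 : P * R * P = P)
    (h3 : (R * P)ᵀ = R * P) (h4 : (P * R)ᵀ = P * R)
    (F : EuclideanSpace ℝ (Fin n) → ℝ)
    (hF : ∀ f, F f = (1 / 2) * ‖g - Matrix.toEuclideanLin R f‖ ^ 2)
    (lam : ℕ → ℝ) (hlam : ∀ k, 0 < lam k)
    (hdiv : Tendsto (fun N => ∑ k ∈ Finset.range N, lam k) atTop atTop)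
    (f : ℕ → EuclideanSpace ℝ (Fin n))
    (hf0 : f 0 = 0)
    (hprox : ∀ k : ℕ, ∀ y : EuclideanSpace ℝ (Fin n),
      F (f (k + 1)) + 1 / (2 * lam k) * ‖f (k + 1) - f k‖ ^ 2
        ≤ F y + 1 / (2 * lam k) * ‖y - f k‖ ^ 2) :
    Tendsto f atTop (𝓝 (Matrix.toEuclideanLin P g)) := by
  set L : EuclideanSpace ℝ (Fin n) →ₗ[ℝ] EuclideanSpace ℝ (Fin m) :=
    Matrix.toEuclideanLin R with hL
  have hadj : LinearMap.adjoint L = Matrix.toEuclideanLin Rᵀ := by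
    rw [hL, ← Matrix.toEuclideanLin_conjTranspose_eq_adjoint,
      Matrix.conjTranspose_eq_transpose_of_trivial]
  set fs : EuclideanSpace ℝ (Fin n) := Matrix.toEuclideanLin P g with hfs
  -- matrix identity : Rᵀ * (R * P) = Rᵀ
  have hmat : Rᵀ * (R * P) = Rᵀ := by
    calc Rᵀ * (R * P) = Rᵀ * (R * P)ᵀ := by rw [h3]
      _ = ((R * P) * R)ᵀ := (Matrix.transpose_mul _ _).symm
      _ = Rᵀ := by rw [h1]
  have hstar : (LinearMap.adjoint L) (L fs) = (LinearMap.adjoint L) g := by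
    rw [hadj, hL, hfs, ← toEuclideanLin_mul_apply, ← toEuclideanLin_mul_apply]
    first
    | rw [hmat]
    | rw [Matrix.mul_assoc, hmat]
  have hrange : fs ∈ LinearMap.range (LinearMap.adjoint L) := by
    rw [hadj]
    have hP : P = Rᵀ * (Pᵀ * P) := by
      calc P = P * R * P := h2.symm
        _ = (P * R)ᵀ * P := by rw [h4]
        _ = Rᵀ * Pᵀ * P := by rw [Matrix.transpose_mul]
        _ = Rᵀ * (Pᵀ * P) := Matrix.mul_assoc _ _ _
    refine ⟨Matrix.toEuclideanLin (Pᵀ * P) g, ?_⟩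
    rw [hfs, ← toEuclideanLin_mul_apply, ← hP]
  have hprox' : ∀ k y,
      (1/2 : ℝ) * ‖g - L (f (k+1))‖^2 + 1/(2*lam k) * ‖f (k+1) - f k‖^2
        ≤ (1/2 : ℝ) * ‖g - L y‖^2 + 1/(2*lam k) * ‖y - f k‖^2 := by
    intro k y
    have := hprox k y
    rw [hF, hF] at this
    exact this
  exact prox_tendsto L g fs hstar hrange lam hlam hdiv f hf0 hprox'
end

section
/- Let F : ℝⁿ → (−∞, ∞] be a convex function not identically +∞, let (λ_k) be positive reals, and let (x_k) be a proximal sequence for F with parameters (λ_k). Then for every minimizer x of F (i.e. every x with F(x) = inf F), the sequence of distances ‖x_k − x‖ is nonincreasing in k. -/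
open Filter Topology

open RealInnerProductSpace

/-- Fejér monotonicity of a proximal sequence: for every minimizer `x` of a
proper convex function `F`, the distances `‖x_k − x‖` are nonincreasing. -/
theorem proximal_sequence_fejer_monotone {n : ℕ}
    (F : EuclideanSpace ℝ (Fin n) → EReal)
    (hbot : ∀ x, F x ≠ ⊥)
    (hproper : ∃ x, F x ≠ ⊤)
    (hconv : ∀ x y : EuclideanSpace ℝ (Fin n), ∀ a b : ℝ, 0 ≤ a → 0 ≤ b → a + b = 1 →
      F (a • x + b • y) ≤ (a : EReal) * F x + (b : EReal) * F y)
    (lam : ℕ → ℝ) (hlam : ∀ k, 0 < lam k)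
    (x : ℕ → EuclideanSpace ℝ (Fin n))
    (hprox : ∀ k : ℕ, ∀ y : EuclideanSpace ℝ (Fin n),
      F (x (k + 1)) + ((1 / (2 * lam k) * ‖x (k + 1) - x k‖ ^ 2 : ℝ) : EReal)
        ≤ F y + ((1 / (2 * lam k) * ‖y - x k‖ ^ 2 : ℝ) : EReal)) :
    ∀ xbar : EuclideanSpace ℝ (Fin n), F xbar = (⨅ z, F z) →
      ∀ k : ℕ, ‖x (k + 1) - xbar‖ ≤ ‖x k - xbar‖ := by
  intro xbar hxbar k
  have hc : (0:ℝ) < 1 / (2 * lam k) := by have := hlam k; positivity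
  set c : ℝ := 1 / (2 * lam k) with hcdef
  set u := x (k+1) with hu
  set w := x k with hw
  -- F xbar finite
  obtain ⟨z0, hz0⟩ := hproper
  have hxt : F xbar ≠ ⊤ := by
    rw [hxbar]
    intro h
    exact hz0 (top_le_iff.mp (h ▸ iInf_le F z0))
  obtain ⟨r, hr⟩ : ∃ r : ℝ, F xbar = (r : EReal) :=
    ⟨(F xbar).toReal, (EReal.coe_toReal hxt (hbot xbar)).symm⟩
  -- F u finite
  have hprox1 := hprox k xbar
  have hut : F u ≠ ⊤ := by
    intro h
    rw [h, EReal.top_add_of_ne_bot (EReal.coe_ne_bot _), hr, ← EReal.coe_add] at hprox1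
    exact (EReal.coe_ne_top _) (top_le_iff.mp hprox1)
  obtain ⟨s, hs⟩ : ∃ s : ℝ, F u = (s : EReal) :=
    ⟨(F u).toReal, (EReal.coe_toReal hut (hbot u)).symm⟩
  have hrs : r ≤ s := by
    have h1 : F xbar ≤ F u := hxbar ▸ iInf_le F u
    rw [hr, hs] at h1
    exact_mod_cast h1
  -- key inequality for interpolated points
  have key : ∀ t : ℝ, 0 < t → t ≤ 1 → c * ‖u - w‖^2 ≤ c * ‖(u - w) + t • (xbar - u)‖^2 := by
    intro t ht0 ht1
    have hyeq : (1 - t) • u + t • xbar - w = (u - w) + t • (xbar - u) := by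
      module
    have hFy := hconv u xbar (1 - t) t (by linarith) (le_of_lt ht0) (by ring)
    have hFy2 : F ((1 - t) • u + t • xbar) ≤ (((1 - t) * s + t * r : ℝ) : EReal) := by
      rw [hs, hr] at hFy
      calc F ((1 - t) • u + t • xbar) ≤ ((1 - t : ℝ) : EReal) * (s : EReal) + (t : EReal) * (r : EReal) := hFy
        _ = (((1 - t) * s + t * r : ℝ) : EReal) := by
            rw [← EReal.coe_mul, ← EReal.coe_mul, ← EReal.coe_add]
    have h2 := hprox k ((1 - t) • u + t • xbar)
    rw [hs, hyeq] at h2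
    have h3 : ((s + c * ‖u - w‖^2 : ℝ) : EReal)
        ≤ (((1 - t) * s + t * r + c * ‖(u - w) + t • (xbar - u)‖^2 : ℝ) : EReal) := by
      push_cast
      calc ((s : EReal) + (c * ‖u - w‖^2 : ℝ))
          ≤ F ((1 - t) • u + t • xbar) + ((c * ‖(u - w) + t • (xbar - u)‖^2 : ℝ) : EReal) := h2
        _ ≤ (((1 - t) * s + t * r : ℝ) : EReal) + ((c * ‖(u - w) + t • (xbar - u)‖^2 : ℝ) : EReal) :=
            add_le_add_left hFy2 _
        _ = _ := by rw [← EReal.coe_add]; push_cast; ring_nf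
    have h4 : s + c * ‖u - w‖^2 ≤ (1 - t) * s + t * r + c * ‖(u - w) + t • (xbar - u)‖^2 := by
      exact_mod_cast h3
    nlinarith [mul_le_mul_of_nonneg_left hrs (le_of_lt ht0)]
  -- deduce inner product nonneg
  have hI : 0 ≤ ⟪u - w, xbar - u⟫ := by
    set I := ⟪u - w, xbar - u⟫ with hIdef
    set N := ‖xbar - u‖^2 with hNdef
    have expand : ∀ t : ℝ, ‖(u - w) + t • (xbar - u)‖^2 = ‖u - w‖^2 + 2 * (t * I) + t^2 * N := by
      intro t
      rw [norm_add_sq_real, real_inner_smul_right, norm_smul, mul_pow, Real.norm_eq_abs,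
        sq_abs, hNdef]
      try ring
    have key2 : ∀ t : ℝ, 0 < t → t ≤ 1 → 0 ≤ 2 * I + t * N := by
      intro t ht0 ht1
      have := key t ht0 ht1
      rw [expand t] at this
      have h5 : 0 ≤ 2 * (t * I) + t^2 * N := by nlinarith
      nlinarith
    by_contra hneg
    push_neg at hneg
    have hN0 : 0 ≤ N := by positivity
    rcases eq_or_lt_of_le hN0 with hN | hN
    · have := key2 1 one_pos le_rfl
      nlinarith
    · set t := min 1 ((-I) / N) with ht
      have htpos : 0 < t := lt_min one_pos (div_pos (by linarith) hN)
      have := key2 t htpos (min_le_left _ _)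
      have htle : t ≤ (-I) / N := min_le_right _ _
      have h7 : t * N ≤ ((-I) / N) * N := mul_le_mul_of_nonneg_right htle hN0
      rw [div_mul_cancel₀ _ (ne_of_gt hN)] at h7
      linarith
  -- conclude
  have hfinal : ‖u - xbar‖^2 ≤ ‖w - xbar‖^2 := by
    have : w - xbar = (w - u) + (u - xbar) := by module
    rw [this, norm_add_sq_real]
    have hinner : ⟪w - u, u - xbar⟫ = ⟪u - w, xbar - u⟫ := by
      rw [show w - u = -(u - w) by module, show u - xbar = -(xbar - u) by module,
        inner_neg_neg]
    nlinarith [sq_nonneg ‖w - u‖]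
  exact (pow_le_pow_iff_left₀ (norm_nonneg _) (norm_nonneg _) two_ne_zero).mp hfinal
end

section
/- Let R be a real m×n matrix, g ∈ ℝᵐ, λ > 0, and let P be a Penrose pseudoinverse of R. Then the n×n matrix I + λ·Rᵀ·R is invertible, and P·g satisfies the fixed point equation P·g = (I + λ·Rᵀ·R)⁻¹·(P·g) + λ·(I + λ·Rᵀ·R)⁻¹·Rᵀ·g. -/
open Matrix

/-- `I + λ RᵀR` is invertible and `P·g` satisfies the fixed point equation
`P·g = (I + λ RᵀR)⁻¹ (P·g) + λ (I + λ RᵀR)⁻¹ Rᵀ g`. -/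
theorem pseudoinverse_fixed_point_equation {m n : ℕ}
    (R : Matrix (Fin m) (Fin n) ℝ) (g : Fin m → ℝ) (lam : ℝ) (hlam : 0 < lam)
    (P : Matrix (Fin n) (Fin m) ℝ)
    (h1 : R * P * R = R) (h2 : P * R * P = P)
    (h3 : (R * P)ᵀ = R * P) (h4 : (P * R)ᵀ = P * R) :
    IsUnit (1 + lam • (Rᵀ * R)) ∧
    P.mulVec g = (1 + lam • (Rᵀ * R))⁻¹.mulVec (P.mulVec g)
      + lam • ((1 + lam • (Rᵀ * R))⁻¹ * Rᵀ).mulVec g := by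
  set A := 1 + lam • (Rᵀ * R) with hA
  have hsemi : (Rᵀ * R).PosSemidef := by
    simpa using posSemidef_conjTranspose_mul_self R
  have hsmul : (lam • (Rᵀ * R)).PosSemidef := by
    refine ⟨?_, fun x => ?_⟩
    · unfold Matrix.IsHermitian
      rw [conjTranspose_smul]
      simp [hsemi.1.eq]
    · exact (hsemi.smul hlam.le).2 x
  have hpd : A.PosDef := Matrix.PosDef.one.add_posSemidef hsmul
  have hu : IsUnit A := hpd.isUnit
  refine ⟨hu, ?_⟩
  have hinv : A⁻¹ * A = 1 := nonsing_inv_mul A ((isUnit_iff_isUnit_det A).1 hu)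
  -- key algebraic identity : Rᵀ * R * P = Rᵀ
  have key : Rᵀ * (R * P) = Rᵀ := by
    calc Rᵀ * (R * P) = Rᵀ * (R * P)ᵀ := by rw [h3]
    _ = Rᵀ * (Pᵀ * Rᵀ) := by rw [transpose_mul]
    _ = (R * P * R)ᵀ := by simp [transpose_mul, Matrix.mul_assoc]
    _ = Rᵀ := by rw [h1]
  have hAP : A.mulVec (P.mulVec g) = P.mulVec g + lam • Rᵀ.mulVec g := by
    rw [hA, add_mulVec, one_mulVec, smul_mulVec, mulVec_mulVec,
      Matrix.mul_assoc, key]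
  calc P.mulVec g = (A⁻¹ * A).mulVec (P.mulVec g) := by rw [hinv, one_mulVec]
    _ = A⁻¹.mulVec (A.mulVec (P.mulVec g)) := by rw [← mulVec_mulVec]
    _ = A⁻¹.mulVec (P.mulVec g + lam • Rᵀ.mulVec g) := by rw [hAP]
    _ = A⁻¹.mulVec (P.mulVec g) + lam • (A⁻¹ * Rᵀ).mulVec g := by
        rw [mulVec_add, mulVec_smul]
        simp [mulVec_mulVec]
end

section
/- Let R be a real m×n matrix, g ∈ ℝᵐ, ε > 0, and let (λ_k) be positive reals with Σ λ_k = ∞. Then the matrix Rᵀ·R + ε·I is invertible, and any proximal sequence (f_k) for F_ε(f) := (1/2)‖g − R·f‖² + (ε/2)‖f‖² with parameters (λ_k), starting at an arbitrary f₀ ∈ ℝⁿ, converges to (Rᵀ·R + ε·I)⁻¹·Rᵀ·g, the unique minimizer of F_ε. -/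
open Matrix Filter Topology

local notation "⟪" x ", " y "⟫" => @inner ℝ _ _ x y

section Aux

variable {E : Type*} [NormedAddCommGroup E] [InnerProductSpace ℝ E]

lemma quad_expand (S : E →ₗ[ℝ] E) (hsym : ∀ u v : E, ⟪S u, v⟫ = ⟪u, S v⟫) (b x y : E) :
    (1/2 * ⟪S y, y⟫ - ⟪b, y⟫) - (1/2 * ⟪S x, x⟫ - ⟪b, x⟫)
      = ⟪S x - b, y - x⟫ + 1/2 * ⟪S (y - x), y - x⟫ := by
  have h1 : ⟪S y, x⟫ = ⟪S x, y⟫ := by rw [hsym y x, real_inner_comm]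
  simp only [map_sub, inner_sub_left, inner_sub_right]
  linarith

lemma quad_min_critical (S : E →ₗ[ℝ] E) (hS : ∀ u : E, (0:ℝ) ≤ ⟪S u, u⟫)
    (hsym : ∀ u v : E, ⟪S u, v⟫ = ⟪u, S v⟫) (b x : E)
    (hmin : ∀ y : E, 1/2 * ⟪S x, x⟫ - ⟪b, x⟫ ≤ 1/2 * ⟪S y, y⟫ - ⟪b, y⟫) :
    S x = b := by
  have key : ∀ u : E, ⟪S x - b, u⟫ = 0 := by
    intro u
    set c : ℝ := ⟪S x - b, u⟫ with hc
    set q : ℝ := 1/2 * ⟪S u, u⟫ with hq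
    have hq0 : 0 ≤ q := by have := hS u; rw [hq]; linarith
    have ht : ∀ t : ℝ, 0 ≤ t * c + t^2 * q := by
      intro t
      have h := hmin (x + t • u)
      have he := quad_expand S hsym b x (x + t • u)
      rw [add_sub_cancel_left] at he
      have h2 : ⟪S x - b, t • u⟫ = t * c := by rw [hc, inner_smul_right]
      have h3 : ⟪S (t • u), t • u⟫ = t^2 * ⟪S u, u⟫ := by
        rw [S.map_smul, inner_smul_left, inner_smul_right]
        simp [sq]; ring
      rw [h2, h3] at he
      rw [hq]
      nlinarith [he, h]
    have hd : (0:ℝ) < 2 * q + 1 := by linarith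
    have h5 := ht (-c / (2 * q + 1))
    have h6 : c^2 ≤ 0 := by
      have h7 : (-c / (2*q+1)) * c + (-c / (2*q+1))^2 * q
          = -(c^2 * (q + 1)) / (2*q+1)^2 := by field_simp; ring
      rw [h7] at h5
      have h8 : 0 ≤ c^2 * (q+1) / (2*q+1)^2 := by positivity
      have h5' : -(c^2 * (q+1)) / (2*q+1)^2 = -(c^2 * (q+1) / (2*q+1)^2) := by ring
      rw [h5'] at h5
      have h9 : c^2 * (q+1) / (2*q+1)^2 = 0 := le_antisymm (by linarith) h8
      have h10 : c^2 * (q+1) = 0 := by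
        field_simp at h9; simpa using h9
      nlinarith
    nlinarith [sq_nonneg c]
  have h8 := key (S x - b)
  rwa [inner_self_eq_zero, sub_eq_zero] at h8

end Aux

section MatAux

lemma toEuc_mul {p q r : ℕ} (A : Matrix (Fin p) (Fin q) ℝ) (B : Matrix (Fin q) (Fin r) ℝ)
    (v : EuclideanSpace ℝ (Fin r)) :
    Matrix.toEuclideanLin (A * B) v = Matrix.toEuclideanLin A (Matrix.toEuclideanLin B v) := by
  simp [Matrix.toEuclideanLin_apply, Matrix.mulVec_mulVec]

lemma toEuc_smul_one {p : ℕ} (a : ℝ) (v : EuclideanSpace ℝ (Fin p)) :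
    Matrix.toEuclideanLin (a • (1 : Matrix (Fin p) (Fin p) ℝ)) v = a • v := by
  simp [Matrix.toEuclideanLin_apply, Matrix.smul_mulVec, Matrix.one_mulVec]

lemma toEuc_adj {p q : ℕ} (A : Matrix (Fin p) (Fin q) ℝ) (u : EuclideanSpace ℝ (Fin p))
    (v : EuclideanSpace ℝ (Fin q)) :
    ⟪Matrix.toEuclideanLin Aᵀ u, v⟫ = ⟪u, Matrix.toEuclideanLin A v⟫ := by
  rw [← Matrix.conjTranspose_eq_transpose_of_trivial,
    Matrix.toEuclideanLin_conjTranspose_eq_adjoint, LinearMap.adjoint_inner_left]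

lemma posdef_M {p q : ℕ} (R : Matrix (Fin p) (Fin q) ℝ) (eps : ℝ) (heps : 0 < eps) :
    (Rᵀ * R + eps • (1 : Matrix (Fin q) (Fin q) ℝ)).PosDef := by
  have h1 : (Rᵀ * R : Matrix (Fin q) (Fin q) ℝ).PosSemidef := by
    simpa [Matrix.conjTranspose_eq_transpose_of_trivial] using
      Matrix.posSemidef_conjTranspose_mul_self R
  have h2 : (eps • (1 : Matrix (Fin q) (Fin q) ℝ)).PosDef := by
    exact Matrix.PosDef.one.smul heps
  exact Matrix.PosDef.posSemidef_add h1 h2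

end MatAux

/-- For the Tikhonov-regularized least-squares functional
`F_ε(f) = (1/2)‖g − R·f‖² + (ε/2)‖f‖²`, the matrix `RᵀR + εI` is invertible and
any proximal sequence with divergent parameter series converges to
`(RᵀR + εI)⁻¹ Rᵀ g`, the unique minimizer of `F_ε`. -/
theorem proximal_sequence_tendsto_tikhonov_solution {m n : ℕ}
    (R : Matrix (Fin m) (Fin n) ℝ) (g : EuclideanSpace ℝ (Fin m))
    (eps : ℝ) (heps : 0 < eps)
    (lam : ℕ → ℝ) (hlam : ∀ k, 0 < lam k)
    (hdiv : Tendsto (fun N => ∑ k ∈ Finset.range N, lam k) atTop atTop)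
    (Feps : EuclideanSpace ℝ (Fin n) → ℝ)
    (hF : ∀ f, Feps f = (1 / 2) * ‖g - Matrix.toEuclideanLin R f‖ ^ 2
      + (eps / 2) * ‖f‖ ^ 2)
    (f : ℕ → EuclideanSpace ℝ (Fin n))
    (hprox : ∀ k : ℕ, ∀ y : EuclideanSpace ℝ (Fin n),
      Feps (f (k + 1)) + 1 / (2 * lam k) * ‖f (k + 1) - f k‖ ^ 2
        ≤ Feps y + 1 / (2 * lam k) * ‖y - f k‖ ^ 2) :
    IsUnit (Rᵀ * R + eps • (1 : Matrix (Fin n) (Fin n) ℝ)) ∧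
    Tendsto f atTop
      (𝓝 (Matrix.toEuclideanLin ((Rᵀ * R + eps • 1)⁻¹ * Rᵀ) g)) ∧
    (∀ y : EuclideanSpace ℝ (Fin n),
      Feps (Matrix.toEuclideanLin ((Rᵀ * R + eps • 1)⁻¹ * Rᵀ) g) ≤ Feps y) ∧
    (∀ y : EuclideanSpace ℝ (Fin n), (∀ z, Feps y ≤ Feps z) →
      y = Matrix.toEuclideanLin ((Rᵀ * R + eps • 1)⁻¹ * Rᵀ) g) := by
  set M : Matrix (Fin n) (Fin n) ℝ := Rᵀ * R + eps • 1 with hM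
  have hMpd := posdef_M R eps heps
  have hMunit : IsUnit M := hMpd.isUnit
  set T : EuclideanSpace ℝ (Fin n) →ₗ[ℝ] EuclideanSpace ℝ (Fin n) :=
    Matrix.toEuclideanLin M with hT
  set b : EuclideanSpace ℝ (Fin n) := Matrix.toEuclideanLin Rᵀ g with hb
  set fstar : EuclideanSpace ℝ (Fin n) := Matrix.toEuclideanLin (M⁻¹ * Rᵀ) g with hfs
  have hMsymm : Mᵀ = M := by
    rw [hM]
    simp [Matrix.transpose_add, Matrix.transpose_mul, Matrix.transpose_smul,
      Matrix.transpose_one]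
  have hsymT : ∀ u v : EuclideanSpace ℝ (Fin n), ⟪T u, v⟫ = ⟪u, T v⟫ := by
    intro u v
    rw [hT]
    conv_lhs => rw [← hMsymm]
    exact toEuc_adj M u v
  have hTdecomp : ∀ u, T u = Matrix.toEuclideanLin Rᵀ (Matrix.toEuclideanLin R u)
      + eps • u := by
    intro u
    rw [hT, hM, map_add, LinearMap.add_apply, ← toEuc_mul, toEuc_smul_one]
  have hTinner : ∀ u, ⟪T u, u⟫ = ‖Matrix.toEuclideanLin R u‖^2 + eps * ‖u‖^2 := by
    intro u
    rw [hTdecomp u, inner_add_left, toEuc_adj, real_inner_self_eq_norm_sq,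
      real_inner_smul_left, real_inner_self_eq_norm_sq]
  have hTpos : ∀ u, eps * ‖u‖^2 ≤ ⟪T u, u⟫ := fun u => by
    rw [hTinner]; nlinarith [sq_nonneg ‖Matrix.toEuclideanLin R u‖]
  have hTnonneg : ∀ u, (0:ℝ) ≤ ⟪T u, u⟫ := fun u =>
    le_trans (by positivity) (hTpos u)
  have hTfstar : T fstar = b := by
    rw [hT, hfs, ← toEuc_mul, ← Matrix.mul_assoc,
      Matrix.mul_nonsing_inv _ ((Matrix.isUnit_iff_isUnit_det _).mp hMunit), Matrix.one_mul, hb]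
  have hFQ : ∀ y, Feps y = (1/2 * ⟪T y, y⟫ - ⟪b, y⟫) + 1/2 * ‖g‖^2 := by
    intro y
    rw [hF y]
    have h1 : ‖g - Matrix.toEuclideanLin R y‖^2
        = ‖g‖^2 - 2 * ⟪g, Matrix.toEuclideanLin R y⟫ + ‖Matrix.toEuclideanLin R y‖^2 :=
      norm_sub_sq_real g _
    have h2 : ⟪b, y⟫ = ⟪g, Matrix.toEuclideanLin R y⟫ := by rw [hb]; exact toEuc_adj R g y
    have h3 := hTinner y
    rw [h1, h2, h3]; ring
  have hmin_fstar : ∀ y, Feps fstar ≤ Feps y := by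
    intro y
    rw [hFQ, hFQ, hTfstar]
    have he := quad_expand T hsymT b fstar y
    rw [hTfstar, sub_self, inner_zero_left] at he
    have := hTnonneg (y - fstar)
    linarith
  have huniq : ∀ y, (∀ z, Feps y ≤ Feps z) → y = fstar := by
    intro y hy
    have hcrit : T y = b := by
      apply quad_min_critical T hTnonneg hsymT b y
      intro z
      have h1 := hy z
      rw [hFQ y, hFQ z] at h1; linarith
    have h0 : T (y - fstar) = 0 := by rw [map_sub, hcrit, hTfstar, sub_self]
    have h2 := hTpos (y - fstar)
    rw [h0, inner_zero_left] at h2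
    have h2s : ‖y - fstar‖^2 = 0 := le_antisymm (by nlinarith) (sq_nonneg _)
    have h3 : ‖y - fstar‖ = 0 := pow_eq_zero_iff two_ne_zero |>.mp h2s
    rwa [norm_sub_eq_zero_iff] at h3
  -- exact prox recursion
  have hrec : ∀ k, T (f (k+1)) + (lam k)⁻¹ • f (k+1) = b + (lam k)⁻¹ • f k := by
    intro k
    set c : ℝ := (lam k)⁻¹ with hcdef
    have hc : 0 < c := inv_pos.mpr (hlam k)
    set S : EuclideanSpace ℝ (Fin n) →ₗ[ℝ] EuclideanSpace ℝ (Fin n) :=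
      T + c • LinearMap.id with hSdef
    have hSapp : ∀ u, S u = T u + c • u := fun u => rfl
    have hSsym : ∀ u v, ⟪S u, v⟫ = ⟪u, S v⟫ := by
      intro u v
      rw [hSapp, hSapp, inner_add_left, inner_add_right, real_inner_smul_left,
        real_inner_smul_right, hsymT]
    have hSnn : ∀ u, (0:ℝ) ≤ ⟪S u, u⟫ := by
      intro u
      rw [hSapp, inner_add_left, real_inner_smul_left, real_inner_self_eq_norm_sq]
      have := hTnonneg u
      have : (0:ℝ) ≤ c * ‖u‖^2 := by positivity
      linarith [hTnonneg u]
    have key : ∀ z, 1/2 * ⟪S z, z⟫ - ⟪b + c • f k, z⟫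
        = Feps z + 1/(2 * lam k) * ‖z - f k‖^2 - (1/2 * ‖g‖^2 + c/2 * ‖f k‖^2) := by
      intro z
      rw [hFQ z]
      have h1 : ⟪S z, z⟫ = ⟪T z, z⟫ + c * ‖z‖^2 := by
        rw [hSapp, inner_add_left, real_inner_smul_left, real_inner_self_eq_norm_sq]
      have h2 : ⟪b + c • f k, z⟫ = ⟪b, z⟫ + c * ⟪f k, z⟫ := by
        rw [inner_add_left, real_inner_smul_left]
      have h3 : ‖z - f k‖^2 = ‖z‖^2 - 2 * ⟪z, f k⟫ + ‖f k‖^2 := norm_sub_sq_real z (f k)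
      have h4 : ⟪z, f k⟫ = ⟪f k, z⟫ := real_inner_comm _ _
      have h5 : 1/(2 * lam k) = c/2 := by rw [hcdef]; field_simp
      rw [h1, h2, h3, h4, h5]; ring
    have hmin : ∀ y, 1/2 * ⟪S (f (k+1)), f (k+1)⟫ - ⟪b + c • f k, f (k+1)⟫
        ≤ 1/2 * ⟪S y, y⟫ - ⟪b + c • f k, y⟫ := by
      intro y
      rw [key, key]
      linarith [hprox k y]
    have hfin := quad_min_critical S hSnn hSsym (b + c • f k) (f (k+1)) hmin
    rw [hSapp] at hfin
    exact hfin
  obtain ⟨d, hd_def⟩ : ∃ d : ℕ → ℝ, ∀ k, d k = ‖f k - fstar‖ :=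
    ⟨fun k => ‖f k - fstar‖, fun k => rfl⟩
  have hdnn : ∀ k, 0 ≤ d k := fun k => (hd_def k) ▸ norm_nonneg _
  have hkey : ∀ k, (1 + eps * lam k) * d (k+1) ≤ d k := by
    intro k
    rw [hd_def, hd_def]
    have hrk := hrec k
    set c : ℝ := (lam k)⁻¹ with hcdef
    have hc : 0 < c := inv_pos.mpr (hlam k)
    set e : EuclideanSpace ℝ (Fin n) := f (k+1) - fstar with he
    have h1 : T e + c • e = c • (f k - fstar) := by
      calc T e + c • e
          = (T (f (k+1)) + c • f (k+1)) - (T fstar + c • fstar) := by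
            rw [he, map_sub, smul_sub]; abel
        _ = (b + c • f k) - (b + c • fstar) := by rw [hrk, hTfstar]
        _ = c • (f k - fstar) := by rw [smul_sub]; abel
    have h2 : ⟪T e, e⟫ + c * ‖e‖^2 = c * ⟪f k - fstar, e⟫ := by
      have h2' : ⟪T e + c • e, e⟫ = ⟪c • (f k - fstar), e⟫ := by rw [h1]
      rw [inner_add_left, real_inner_smul_left, real_inner_smul_left,
        real_inner_self_eq_norm_sq] at h2'
      exact h2'
    have h3 := hTpos e
    have h4 : ⟪f k - fstar, e⟫ ≤ ‖f k - fstar‖ * ‖e‖ := real_inner_le_norm _ _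
    have h5 : (eps + c) * ‖e‖^2 ≤ c * (‖f k - fstar‖ * ‖e‖) := by
      nlinarith [mul_le_mul_of_nonneg_left h4 hc.le]
    have hlk := hlam k
    have hcl : c * lam k = 1 := inv_mul_cancel₀ hlk.ne'
    have hne : lam k ≠ 0 := hlk.ne'
    have h6 : (1 + eps * lam k) * ‖e‖^2 ≤ ‖f k - fstar‖ * ‖e‖ := by
      have h5' := mul_le_mul_of_nonneg_left h5 hlk.le
      have hinv : lam k * c = 1 := by rw [hcdef]; exact mul_inv_cancel₀ hne
      have e1 : lam k * ((eps + c) * ‖e‖^2) = (1 + eps * lam k) * ‖e‖^2 := by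
        linear_combination ‖e‖^2 * hinv
      have e2 : lam k * (c * (‖f k - fstar‖ * ‖e‖)) = ‖f k - fstar‖ * ‖e‖ := by
        linear_combination (‖f k - fstar‖ * ‖e‖) * hinv
      rw [e1, e2] at h5'
      exact h5'
    show (1 + eps * lam k) * ‖e‖ ≤ ‖f k - fstar‖
    rcases eq_or_lt_of_le (norm_nonneg e) with h7 | h7
    · rw [← h7, mul_zero]; exact norm_nonneg _
    · have h8 : (1 + eps * lam k) * ‖e‖ * ‖e‖ ≤ ‖f k - fstar‖ * ‖e‖ := by
        calc (1 + eps * lam k) * ‖e‖ * ‖e‖ = (1 + eps * lam k) * ‖e‖^2 := by ring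
          _ ≤ _ := h6
      exact le_of_mul_le_mul_right h8 h7
  have hbound : ∀ N, (1 + eps * ∑ k ∈ Finset.range N, lam k) * d N ≤ d 0 := by
    intro N
    induction N with
    | zero => simp
    | succ N ih =>
      have hk := hkey N
      have hS0 : 0 ≤ ∑ k ∈ Finset.range N, lam k :=
        Finset.sum_nonneg fun i _ => (hlam i).le
      rw [Finset.sum_range_succ]
      have hA := mul_le_mul_of_nonneg_left hk
        (by positivity : (0:ℝ) ≤ 1 + eps * ∑ k ∈ Finset.range N, lam k)
      have hq : 0 ≤ eps * eps * (∑ k ∈ Finset.range N, lam k) * lam N * d (N+1) :=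
        mul_nonneg (mul_nonneg (mul_nonneg (mul_nonneg heps.le heps.le) hS0)
          (hlam N).le) (hdnn (N+1))
      linarith [hA, ih, hq]
  have hSdiv : Tendsto (fun N => 1 + eps * ∑ k ∈ Finset.range N, lam k) atTop atTop :=
    tendsto_atTop_add_const_left _ 1 (hdiv.const_mul_atTop heps)
  have hdzero : Tendsto d atTop (𝓝 0) := by
    apply squeeze_zero hdnn
      (g := fun N => d 0 / (1 + eps * ∑ k ∈ Finset.range N, lam k))
    · intro N
      have hS0 : 0 ≤ ∑ k ∈ Finset.range N, lam k :=
        Finset.sum_nonneg fun i _ => (hlam i).le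
      have hpos : (0:ℝ) < 1 + eps * ∑ k ∈ Finset.range N, lam k := by positivity
      rw [le_div_iff₀ hpos]
      linarith [hbound N, mul_comm (d N) (1 + eps * ∑ k ∈ Finset.range N, lam k)]
    · exact Tendsto.div_atTop tendsto_const_nhds hSdiv
  have hconv : Tendsto f atTop (𝓝 fstar) := by
    rw [tendsto_iff_norm_sub_tendsto_zero]
    have hfun : (fun N => ‖f N - fstar‖) = d := funext fun k => (hd_def k).symm
    rw [hfun]
    exact hdzero
  exact ⟨hMunit, hconv, hmin_fstar, huniq⟩
end
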